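/- In the category of finite-dimensional complex Hilbert spaces, every normal linear endomorphism f : A → A (f ∘ f† = f† ∘ f) is internally diagonalizable: there exists a commutative dagger Frobenius monoid (A, m, u) and a vector φ ∈ A such that f = m ∘ (φ ⊗ id_A). Conversely, every internally diagonalizable endomorphism is normal. -/

import Mathlib

noncomputable section

namespace QAlg

variable {V : Type*} [NormedAddCommGroup V] [InnerProductSpace ℂ V] [FiniteDimensional ℂ V]

/-- Monoid (unital associative algebra) axioms. -/
def IsMonoidH (m : V →ₗ[ℂ] V →ₗ[ℂ] V) (u : V) : Prop :=
  (∀ a b c : V, m (m a b) c = m a (m b c)) ∧ (∀ a : V, m u a = a) ∧ (∀ a : V, m a u = a)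

/-- The dagger Frobenius conditions, expressed equivalently via inner products
(pairing against elementary tensors to eliminate the comultiplication `m†`). -/
def IsDagFrobH (m : V →ₗ[ℂ] V →ₗ[ℂ] V) : Prop :=
  (∀ a b c d : V,
    (inner ℂ (m a (LinearMap.adjoint (m.flip d) b)) c : ℂ) = inner ℂ (m a b) (m c d)) ∧
  (∀ a b c d : V,
    (inner ℂ (m (LinearMap.adjoint (m c) a) b) d : ℂ) = inner ℂ (m a b) (m c d))

/-! A normal operator is diagonalised by an orthonormal basis `b`, since its real and imaginary
parts are commuting self-adjoint operators. Coordinatewise multiplication in `b` is a commutative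
dagger Frobenius monoid with unit `∑ i, b i` (its comultiplication copies the basis vectors), and
`f` is multiplication by `∑ i, μ i • b i`, where `μ i` are the eigenvalues. Conversely, in a
commutative dagger Frobenius monoid the adjoint of multiplication by `φ` is again a
multiplication, by `(m φ)† u`; multiplications commute with each other, so `f = m φ` is normal. -/

open Module.End
open scoped InnerProductSpace ComplexConjugate ComplexStarModule

theorem _root_.LinearMap.IsSymmetric.exists_orthonormalBasis_eigenvectors_of_commute
    {𝕜 E : Type*} [RCLike 𝕜] [NormedAddCommGroup E] [InnerProductSpace 𝕜 E]
    [FiniteDimensional 𝕜 E] {A B : E →ₗ[𝕜] E} (hA : A.IsSymmetric) (hB : B.IsSymmetric)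
    (hAB : Commute A B) :
    ∃ (b : OrthonormalBasis (Fin (Module.finrank 𝕜 E)) 𝕜 E) (α β : Fin (Module.finrank 𝕜 E) → 𝕜),
      ∀ i, A (b i) = α i • b i ∧ B (b i) = β i • b i := by
  classical
  let S (p : 𝕜 × 𝕜) : Submodule 𝕜 E := eigenspace A p.2 ⊓ eigenspace B p.1
  have hS := hA.directSum_isInternal_of_commute hB hAB
  let := hS.submodule_iSupIndep.fintypeNeBotOfFiniteDimensional
  have hV : DirectSum.IsInternal fun p : {p // S p ≠ ⊥} => S p :=
    DirectSum.isInternal_ne_bot_iff.mpr hS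
  have hV' := (hA.orthogonalFamily_eigenspace_inf_eigenspace hB).comp
    (Subtype.val_injective (p := fun p => S p ≠ ⊥))
  refine ⟨hV.subordinateOrthonormalBasis rfl hV',
    fun i => (hV.subordinateOrthonormalBasisIndex rfl i hV').1.2,
    fun i => (hV.subordinateOrthonormalBasisIndex rfl i hV').1.1, fun i => ?_⟩
  obtain ⟨hAi, hBi⟩ := hV.subordinateOrthonormalBasis_subordinate rfl i hV'
  exact ⟨mem_eigenspace_iff.mp hAi, mem_eigenspace_iff.mp hBi⟩

theorem exists_orthonormalBasis_eigenvectors_of_isStarNormal (f : V →ₗ[ℂ] V) [IsStarNormal f] :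
    ∃ (b : OrthonormalBasis (Fin (Module.finrank ℂ V)) ℂ V) (μ : Fin (Module.finrank ℂ V) → ℂ),
      ∀ i, f (b i) = μ i • b i := by
  have hsymm (g : selfAdjoint (V →ₗ[ℂ] V)) : (g : V →ₗ[ℂ] V).IsSymmetric :=
    (LinearMap.isSymmetric_iff_isSelfAdjoint _).mpr g.2
  obtain ⟨b, α, β, hb⟩ := (hsymm (ℜ f)).exists_orthonormalBasis_eigenvectors_of_commute
    (hsymm (ℑ f)) (Commute.realPart_imaginaryPart f)
  refine ⟨b, fun i => α i + Complex.I * β i, fun i => ?_⟩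
  conv_lhs => rw [← realPart_add_I_smul_imaginaryPart f]
  simp [(hb i).1, (hb i).2, add_smul, mul_smul]

section CoordMul

variable {𝕜 E ι : Type*} [RCLike 𝕜] [NormedAddCommGroup E] [InnerProductSpace 𝕜 E] [Fintype ι]
  (b : OrthonormalBasis ι 𝕜 E)

def coordMul : E →ₗ[𝕜] E →ₗ[𝕜] E :=
  LinearMap.mk₂ 𝕜 (fun x y => ∑ i, (b.repr x i * b.repr y i) • b i)
    (fun x x' y => by simp [add_mul, add_smul, Finset.sum_add_distrib])
    (fun c x y => by simp [mul_assoc, smul_smul, Finset.smul_sum])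
    (fun x y y' => by simp [mul_add, add_smul, Finset.sum_add_distrib])
    (fun c x y => by simp [Finset.smul_sum, smul_smul, mul_left_comm])

theorem repr_sum_smul (c : ι → 𝕜) (j : ι) : b.repr (∑ i, c i • b i) j = c j := by
  classical
  simp [OrthonormalBasis.repr_self, Pi.single_apply]

theorem repr_coordMul (x y : E) (j : ι) :
    b.repr (coordMul b x y) j = b.repr x j * b.repr y j :=
  repr_sum_smul b _ j

theorem coordMul_comm (x y : E) : coordMul b x y = coordMul b y x :=
  b.repr.injective <| by ext j; simp only [repr_coordMul, mul_comm]

theorem coordMul_assoc (x y z : E) :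
    coordMul b (coordMul b x y) z = coordMul b x (coordMul b y z) :=
  b.repr.injective <| by ext j; simp only [repr_coordMul, mul_assoc]

theorem coordMul_sum_basis_left (x : E) : coordMul b (∑ i, b i) x = x :=
  b.repr.injective <| by
    ext j
    simpa only [repr_coordMul, one_smul, one_mul] using
      congrArg (· * b.repr x j) (repr_sum_smul b (fun _ => (1 : 𝕜)) j)

theorem inner_eq_sum_repr (x y : E) : ⟪x, y⟫_𝕜 = ∑ i, conj (b.repr x i) * b.repr y i := by
  rw [← b.repr.inner_map_map x y, PiLp.inner_apply]
  simp [mul_comm]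

theorem adjoint_coordMul [FiniteDimensional 𝕜 E] (c : E) :
    LinearMap.adjoint (coordMul b c) = coordMul b (∑ i, conj (b.repr c i) • b i) := by
  refine ((LinearMap.eq_adjoint_iff _ _).mpr fun x y => ?_).symm
  simp only [inner_eq_sum_repr b, repr_coordMul, repr_sum_smul, map_mul, RCLike.conj_conj]
  exact Finset.sum_congr rfl fun i _ => by ring

theorem eq_coordMul_of_apply_eq_smul {f : E →ₗ[𝕜] E} {μ : ι → 𝕜} (hf : ∀ i, f (b i) = μ i • b i) :
    f = coordMul b (∑ i, μ i • b i) := by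
  classical
  refine b.toBasis.ext fun i => b.repr.injective ?_
  ext j
  by_cases hji : j = i <;> simp [hji, hf, repr_coordMul, OrthonormalBasis.repr_self]

end CoordMul

theorem mul_left_comm_of_assoc_comm {R M : Type*} [CommSemiring R] [AddCommMonoid M] [Module R M]
    {m : M →ₗ[R] M →ₗ[R] M} (hassoc : ∀ a b c : M, m (m a b) c = m a (m b c))
    (hcomm : ∀ a b : M, m a b = m b a) (a b c : M) : m a (m b c) = m b (m a c) := by
  rw [← hassoc, hcomm a b, hassoc]

section Frobenius

variable {m : V →ₗ[ℂ] V →ₗ[ℂ] V}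

theorem isDagFrobH_of_adjoint_eq (hassoc : ∀ a b c : V, m (m a b) c = m a (m b c))
    (hcomm : ∀ a b : V, m a b = m b a) (hadj : ∀ c, ∃ c', LinearMap.adjoint (m c) = m c') :
    IsDagFrobH m := by
  constructor
  · intro a b c d
    obtain ⟨d', hd'⟩ := hadj d
    have hflip : m.flip d = m d := LinearMap.ext fun x => hcomm x d
    rw [hflip, hd', hcomm c d, ← LinearMap.adjoint_inner_left, hd',
      mul_left_comm_of_assoc_comm hassoc hcomm]
  · intro a b c d
    obtain ⟨c', hc'⟩ := hadj c
    rw [hc', hassoc, ← LinearMap.adjoint_inner_left, hc']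

theorem IsDagFrobH.adjoint_eq (hF : IsDagFrobH m) {u : V} (hu : ∀ a, m u a = a) (c : V) :
    LinearMap.adjoint (m c) = m (LinearMap.adjoint (m c) u) :=
  ((LinearMap.eq_adjoint_iff _ _).mpr fun a d => by rw [hF.2 u a c d, hu]).symm

end Frobenius

theorem isMonoidH_coordMul {E ι : Type*} [NormedAddCommGroup E] [InnerProductSpace ℂ E] [Fintype ι]
    (b : OrthonormalBasis ι ℂ E) : IsMonoidH (coordMul b) (∑ i, b i) :=
  ⟨coordMul_assoc b, coordMul_sum_basis_left b,
    fun a => (coordMul_comm b a _).trans (coordMul_sum_basis_left b a)⟩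

theorem isDagFrobH_coordMul {ι : Type*} [Fintype ι] (b : OrthonormalBasis ι ℂ V) :
    IsDagFrobH (coordMul b) :=
  isDagFrobH_of_adjoint_eq (coordMul_assoc b) (coordMul_comm b) fun c => ⟨_, adjoint_coordMul b c⟩

/-- A linear endomorphism of a finite-dimensional complex Hilbert space is normal
iff it is internally diagonalizable: it is the action `m ∘ (φ ⊗ id)` of an element
`φ` of a commutative dagger Frobenius monoid on `V`. -/
theorem stmt18 (f : V →ₗ[ℂ] V) :
    f ∘ₗ LinearMap.adjoint f = LinearMap.adjoint f ∘ₗ f ↔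
      ∃ (m : V →ₗ[ℂ] V →ₗ[ℂ] V) (u : V), IsMonoidH m u ∧ (∀ a b : V, m a b = m b a) ∧
        IsDagFrobH m ∧ ∃ φ : V, f = m φ := by
  constructor
  · intro hf
    have : IsStarNormal f := ⟨hf.symm⟩
    obtain ⟨b, μ, hb⟩ := exists_orthonormalBasis_eigenvectors_of_isStarNormal f
    exact ⟨coordMul b, ∑ i, b i, isMonoidH_coordMul b, coordMul_comm b, isDagFrobH_coordMul b,
      _, eq_coordMul_of_apply_eq_smul b hb⟩
  · rintro ⟨m, u, ⟨hassoc, hu, -⟩, hcomm, hF, φ, rfl⟩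
    rw [hF.adjoint_eq hu φ]
    exact LinearMap.ext fun x => mul_left_comm_of_assoc_comm hassoc hcomm _ _ x

end QAlg
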